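/- Let H be a nonzero complex Hilbert space and let A be a bounded linear operator on H. Then (1/4)·‖A*A + AA*‖ + (1/2)·max{‖Re(A)‖, ‖Im(A)‖}·| ‖Re(A) + Im(A)‖ − ‖Re(A) − Im(A)‖ | ≤ w(A)² ≤ w(|Re(A)| + i|Im(A)|)². -/

import Mathlib

open scoped InnerProductSpace
open ContinuousLinearMap

variable {H : Type*} [NormedAddCommGroup H] [InnerProductSpace ℂ H]
  [CompleteSpace H] [Nontrivial H]

/-- The numerical radius of a bounded linear operator. -/
noncomputable def numRad (A : H →L[ℂ] H) : ℝ :=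
  ⨆ x : {x : H // ‖x‖ = 1}, ‖⟪A x.1, x.1⟫_ℂ‖

/-- The Crawford number of a bounded linear operator. -/
noncomputable def crawford (A : H →L[ℂ] H) : ℝ :=
  ⨅ x : {x : H // ‖x‖ = 1}, ‖⟪A x.1, x.1⟫_ℂ‖

/-- The Euclidean operator radius of a pair of bounded linear operators. -/
noncomputable def euclRad (B C : H →L[ℂ] H) : ℝ :=
  ⨆ x : {x : H // ‖x‖ = 1}, Real.sqrt (‖⟪B x.1, x.1⟫_ℂ‖ ^ 2 + ‖⟪C x.1, x.1⟫_ℂ‖ ^ 2)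

/-- The absolute value `|A| = (A*A)^(1/2)` of a bounded linear operator. -/
noncomputable def opAbs (A : H →L[ℂ] H) : H →L[ℂ] H := CFC.sqrt (adjoint A * A)

/-- The real part `Re(A) = (A + A*)/2` of a bounded linear operator. -/
noncomputable def reOp (A : H →L[ℂ] H) : H →L[ℂ] H := (2 : ℂ)⁻¹ • (A + adjoint A)

/-- The imaginary part `Im(A) = (A - A*)/(2i)` of a bounded linear operator. -/
noncomputable def imOp (A : H →L[ℂ] H) : H →L[ℂ] H := (2 * Complex.I)⁻¹ • (A - adjoint A)

/-!
Write `A = P + iQ` with `P = Re A`, `Q = Im A` self-adjoint. Then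
`|⟪A x, x⟫|² = ⟪P x, x⟫² + ⟪Q x, x⟫²`, so `|⟪(P ± Q) x, x⟫| ≤ √2 |⟪A x, x⟫|`, and since the norm
of a self-adjoint operator is the supremum of `|⟪S x, x⟫|` over unit vectors, `‖P ± Q‖ ≤ √2 w(A)`.
With `a = ‖P + Q‖`, `b = ‖P - Q‖`, the identity `A*A + AA* = (P + Q)² + (P - Q)²` and
`2 max ‖P‖ ‖Q‖ ≤ a + b` bound the left-hand side by `(a² + b² + (a + b)|a - b|)/4 = (max a b)² / 2`,
which is at most `w(A)²`.
For the upper bound, `-|P| ≤ P ≤ |P|` gives `|⟪P x, x⟫| ≤ ⟪|P| x, x⟫`, likewise for `Q`, and the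
same identity for `|⟪(|P| + i|Q|) x, x⟫|²` compares the two numerical radii pointwise.
-/

lemma sq_add_sq_add_add_mul_abs_sub (a b : ℝ) :
    a ^ 2 + b ^ 2 + (a + b) * |a - b| = 2 * max a b ^ 2 := by
  rcases le_total a b with h | h
  · rw [abs_of_nonpos (sub_nonpos.mpr h), max_eq_right h]; ring
  · rw [abs_of_nonneg (sub_nonneg.mpr h), max_eq_left h]; ring

lemma abs_add_le_sqrt_two_mul {p q w : ℝ} (h : p ^ 2 + q ^ 2 ≤ w ^ 2) (hw : 0 ≤ w) :
    |p + q| ≤ √2 * w := by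
  refine abs_le_of_sq_le_sq ?_ (by positivity)
  rw [mul_pow, Real.sq_sqrt zero_le_two]
  nlinarith [sq_nonneg (p - q)]

lemma max_norm_le_norm_add_add_norm_sub_div_two {F : Type*} [NormedAddCommGroup F]
    [NormedSpace ℝ F] (x y : F) : max ‖x‖ ‖y‖ ≤ (‖x + y‖ + ‖x - y‖) / 2 := by
  have norm_two_smul (z : F) : ‖(2 : ℝ) • z‖ = 2 * ‖z‖ := by rw [norm_smul]; norm_num
  have hx : ‖(2 : ℝ) • x‖ ≤ ‖x + y‖ + ‖x - y‖ := by
    rw [show (2 : ℝ) • x = (x + y) + (x - y) by module]; exact norm_add_le _ _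
  have hy : ‖(2 : ℝ) • y‖ ≤ ‖x + y‖ + ‖x - y‖ := by
    rw [show (2 : ℝ) • y = (x + y) - (x - y) by module]; exact norm_sub_le _ _
  rw [norm_two_smul] at hx hy
  exact max_le (by linarith) (by linarith)

lemma norm_le_of_forall_abs_re_inner_self_le {𝕜 F : Type*} [RCLike 𝕜] [NormedAddCommGroup F]
    [InnerProductSpace 𝕜 F] {T : F →L[𝕜] F} (hT : (T : F →ₗ[𝕜] F).IsSymmetric) {c : ℝ}
    (hc : 0 ≤ c) (h : ∀ x, ‖x‖ = 1 → |RCLike.re ⟪T x, x⟫_𝕜| ≤ c) : ‖T‖ ≤ c := by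
  rw [T.norm_eq_iSup_rayleighQuotient hT]
  refine ciSup_le fun x => ?_
  rcases eq_or_ne x 0 with rfl | hx
  · simpa using hc
  have hx' : (‖x‖⁻¹ : 𝕜) ≠ 0 := by simpa using hx
  have hu : ‖(‖x‖⁻¹ : 𝕜) • x‖ = 1 := by simp [norm_smul, hx]
  rw [← T.rayleigh_smul x hx', ContinuousLinearMap.rayleighQuotient, hu, one_pow, div_one]
  exact h _ hu

section NumericalRadius

variable {E : Type*} [NormedAddCommGroup E] [InnerProductSpace ℂ E]

lemma bddAbove_norm_inner_self (A : E →L[ℂ] E) :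
    BddAbove (Set.range fun x : {x : E // ‖x‖ = 1} => ‖⟪A x.1, x.1⟫_ℂ‖) := by
  refine ⟨‖A‖, ?_⟩
  rintro _ ⟨⟨x, hx⟩, rfl⟩
  calc ‖⟪A x, x⟫_ℂ‖ ≤ ‖A x‖ * ‖x‖ := norm_inner_le_norm _ _
    _ ≤ ‖A‖ * ‖x‖ * ‖x‖ := by gcongr; exact A.le_opNorm x
    _ = ‖A‖ := by rw [hx, mul_one, mul_one]

lemma norm_inner_self_le_numRad (A : E →L[ℂ] E) {x : E} (hx : ‖x‖ = 1) :
    ‖⟪A x, x⟫_ℂ‖ ≤ numRad A :=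
  le_ciSup (bddAbove_norm_inner_self A) (⟨x, hx⟩ : {x : E // ‖x‖ = 1})

lemma numRad_nonneg (A : E →L[ℂ] E) : 0 ≤ numRad A :=
  Real.iSup_nonneg fun _ => norm_nonneg _

lemma numRad_le_numRad {A B : E →L[ℂ] E}
    (h : ∀ x : E, ‖x‖ = 1 → ‖⟪A x, x⟫_ℂ‖ ≤ ‖⟪B x, x⟫_ℂ‖) : numRad A ≤ numRad B :=
  Real.iSup_le (fun x => (h x.1 x.2).trans (norm_inner_self_le_numRad B x.2)) (numRad_nonneg B)

end NumericalRadius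

section CartesianDecomposition

variable {E : Type*} [NormedAddCommGroup E] [InnerProductSpace ℂ E] [CompleteSpace E]

lemma sq_norm_inner_add_I_smul {P Q : E →L[ℂ] E} (hP : IsSelfAdjoint P) (hQ : IsSelfAdjoint Q)
    (x : E) :
    ‖⟪(P + Complex.I • Q) x, x⟫_ℂ‖ ^ 2 = (⟪P x, x⟫_ℂ).re ^ 2 + (⟪Q x, x⟫_ℂ).re ^ 2 := by
  have hPx : (⟪P x, x⟫_ℂ).im = 0 := hP.isSymmetric.im_inner_apply_self x
  have hQx : (⟪Q x, x⟫_ℂ).im = 0 := hQ.isSymmetric.im_inner_apply_self x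
  rw [add_apply, smul_apply, inner_add_left, inner_smul_left, Complex.conj_I, Complex.sq_norm,
    Complex.normSq_apply]
  simp only [Complex.add_re, Complex.add_im, Complex.mul_re, Complex.mul_im, Complex.neg_re,
    Complex.neg_im, Complex.I_re, Complex.I_im, hPx, hQx]
  ring

variable (A : E →L[ℂ] E)

lemma isSelfAdjoint_reOp : IsSelfAdjoint (reOp A) := by
  rw [IsSelfAdjoint, reOp, star_smul, star_add, star_eq_adjoint, star_eq_adjoint,
    adjoint_adjoint, add_comm]
  simp

lemma isSelfAdjoint_imOp : IsSelfAdjoint (imOp A) := by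
  rw [IsSelfAdjoint, imOp, star_smul, star_sub, star_eq_adjoint, star_eq_adjoint,
    adjoint_adjoint, ← neg_sub, smul_neg, ← neg_smul]
  congr 1
  simp

lemma reOp_add_I_smul_imOp : reOp A + Complex.I • imOp A = A := by
  have h : Complex.I * (2 * Complex.I)⁻¹ = 2⁻¹ := by field_simp
  rw [reOp, imOp, smul_smul, h, ← smul_add]
  module

lemma adjoint_eq_reOp_sub_I_smul_imOp : adjoint A = reOp A - Complex.I • imOp A := by
  conv_lhs => rw [← reOp_add_I_smul_imOp A]
  rw [← star_eq_adjoint, star_add, star_smul, (isSelfAdjoint_reOp A).star_eq,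
    (isSelfAdjoint_imOp A).star_eq, Complex.star_def, Complex.conj_I, neg_smul, sub_eq_add_neg]

lemma adjoint_mul_self_add_mul_adjoint :
    adjoint A * A + A * adjoint A
      = (reOp A + imOp A) * (reOp A + imOp A) + (reOp A - imOp A) * (reOp A - imOp A) := by
  conv_lhs => rw [adjoint_eq_reOp_sub_I_smul_imOp A]; enter [1, 2]; rw [← reOp_add_I_smul_imOp A]
  conv_lhs => enter [2, 1]; rw [← reOp_add_I_smul_imOp A]
  simp only [add_mul, mul_add, sub_mul, mul_sub, smul_mul_assoc, mul_smul_comm, smul_add,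
    smul_sub, smul_smul, Complex.I_mul_I]
  module

lemma sq_norm_inner_self (x : E) :
    ‖⟪A x, x⟫_ℂ‖ ^ 2 = (⟪reOp A x, x⟫_ℂ).re ^ 2 + (⟪imOp A x, x⟫_ℂ).re ^ 2 := by
  simpa only [reOp_add_I_smul_imOp] using
    sq_norm_inner_add_I_smul (isSelfAdjoint_reOp A) (isSelfAdjoint_imOp A) x

lemma sq_re_inner_reOp_add_sq_re_inner_imOp_le (x : E) (hx : ‖x‖ = 1) :
    (⟪reOp A x, x⟫_ℂ).re ^ 2 + (⟪imOp A x, x⟫_ℂ).re ^ 2 ≤ numRad A ^ 2 := by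
  rw [← sq_norm_inner_self]
  exact pow_le_pow_left₀ (norm_nonneg _) (norm_inner_self_le_numRad A hx) 2

lemma norm_reOp_add_imOp_le : ‖reOp A + imOp A‖ ≤ √2 * numRad A := by
  refine norm_le_of_forall_abs_re_inner_self_le
    ((isSelfAdjoint_reOp A).add (isSelfAdjoint_imOp A)).isSymmetric
    (mul_nonneg (Real.sqrt_nonneg 2) (numRad_nonneg A)) fun x hx => ?_
  rw [add_apply, inner_add_left, map_add]
  exact abs_add_le_sqrt_two_mul (sq_re_inner_reOp_add_sq_re_inner_imOp_le A x hx)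
    (numRad_nonneg A)

lemma norm_reOp_sub_imOp_le : ‖reOp A - imOp A‖ ≤ √2 * numRad A := by
  refine norm_le_of_forall_abs_re_inner_self_le
    ((isSelfAdjoint_reOp A).sub (isSelfAdjoint_imOp A)).isSymmetric
    (mul_nonneg (Real.sqrt_nonneg 2) (numRad_nonneg A)) fun x hx => ?_
  rw [sub_apply, inner_sub_left, map_sub, sub_eq_add_neg]
  refine abs_add_le_sqrt_two_mul ?_ (numRad_nonneg A)
  simpa only [RCLike.re_to_complex, neg_sq] using sq_re_inner_reOp_add_sq_re_inner_imOp_le A x hx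

end CartesianDecomposition

section AbsoluteValue

variable {E : Type*} [NormedAddCommGroup E] [InnerProductSpace ℂ E] [CompleteSpace E]

lemma opAbs_eq_cfcAbs (P : E →L[ℂ] E) : opAbs P = CFC.abs P := rfl

lemma isSelfAdjoint_opAbs (P : E →L[ℂ] E) : IsSelfAdjoint (opAbs P) :=
  IsSelfAdjoint.of_nonneg (CFC.abs_nonneg P)

lemma abs_re_inner_le_re_inner_opAbs {P : E →L[ℂ] E} (hP : IsSelfAdjoint P) (x : E) :
    |(⟪P x, x⟫_ℂ).re| ≤ (⟪opAbs P x, x⟫_ℂ).re := by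
  have hle : P ≤ opAbs P := sub_nonneg.mp <| by
    rw [opAbs_eq_cfcAbs, CFC.abs_sub_self P hP]
    exact nsmul_nonneg (CFC.negPart_nonneg P) 2
  have hge : -opAbs P ≤ P := neg_le_iff_add_nonneg'.mpr <| by
    rw [opAbs_eq_cfcAbs, CFC.abs_add_self P hP]
    exact nsmul_nonneg (CFC.posPart_nonneg P) 2
  have h₁ := ((ContinuousLinearMap.le_def _ _).mp hle).re_inner_nonneg_left x
  have h₂ := ((ContinuousLinearMap.le_def _ _).mp hge).re_inner_nonneg_left x
  simp only [sub_apply, neg_apply, inner_sub_left, inner_neg_left, map_sub, map_neg,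
    RCLike.re_to_complex] at h₁ h₂
  exact abs_le.mpr ⟨by linarith, by linarith⟩

lemma numRad_le_numRad_opAbs (A : E →L[ℂ] E) :
    numRad A ≤ numRad (opAbs (reOp A) + Complex.I • opAbs (imOp A)) := by
  refine numRad_le_numRad fun x _ => ?_
  have hP := abs_re_inner_le_re_inner_opAbs (isSelfAdjoint_reOp A) x
  have hQ := abs_re_inner_le_re_inner_opAbs (isSelfAdjoint_imOp A) x
  refine (pow_le_pow_iff_left₀ (norm_nonneg _) (norm_nonneg _) two_ne_zero).mp ?_
  rw [sq_norm_inner_self, sq_norm_inner_add_I_smul (isSelfAdjoint_opAbs _) (isSelfAdjoint_opAbs _),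
    ← sq_abs (⟪reOp A x, x⟫_ℂ).re, ← sq_abs (⟪imOp A x, x⟫_ℂ).re]
  gcongr

end AbsoluteValue

theorem stmt5 (A : H →L[ℂ] H) :
    (1/4) * ‖adjoint A * A + A * adjoint A‖
      + (1/2) * max ‖reOp A‖ ‖imOp A‖ * |‖reOp A + imOp A‖ - ‖reOp A - imOp A‖|
      ≤ (numRad A) ^ 2 ∧
    (numRad A) ^ 2 ≤ (numRad (opAbs (reOp A) + Complex.I • opAbs (imOp A))) ^ 2 := by
  refine ⟨?_, pow_le_pow_left₀ (numRad_nonneg A) (numRad_le_numRad_opAbs A) 2⟩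
  set a := ‖reOp A + imOp A‖
  set b := ‖reOp A - imOp A‖
  have hN : ‖adjoint A * A + A * adjoint A‖ ≤ a ^ 2 + b ^ 2 := by
    rw [adjoint_mul_self_add_mul_adjoint, sq, sq]
    exact (norm_add_le _ _).trans (add_le_add (norm_mul_le _ _) (norm_mul_le _ _))
  calc (1/4) * ‖adjoint A * A + A * adjoint A‖ + (1/2) * max ‖reOp A‖ ‖imOp A‖ * |a - b|
      ≤ (1/4) * (a ^ 2 + b ^ 2) + (1/2) * ((a + b) / 2) * |a - b| := by
        gcongr
        exact max_norm_le_norm_add_add_norm_sub_div_two _ _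
    _ = (1/2) * max a b ^ 2 := by linear_combination (1/4) * sq_add_sq_add_add_mul_abs_sub a b
    _ ≤ (1/2) * (√2 * numRad A) ^ 2 := by
        gcongr
        exact max_le (norm_reOp_add_imOp_le A) (norm_reOp_sub_imOp_le A)
    _ = numRad A ^ 2 := by rw [mul_pow, Real.sq_sqrt zero_le_two]; ring
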